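/- arXiv:1711.04762 — 9 statements merged into one kernel-verified Lean document; each statement's English description precedes it below -/
import Mathlib

section
/- Let H be an abelian group and let A, B, C be subgroups of H. Let G be the subgroup of A × B × C consisting of all triples (a,b,c) with a + b + c = 0, and let N be the subgroup of G generated by the triples in G with a = 0, the triples with b = 0, and the triples with c = 0. Then the homomorphism G → C sending (a,b,c) to c induces a group isomorphism from G/N onto the quotient (C ∩ (A+B)) / ((C ∩ A) + (C ∩ B)). -/
/-!
The projection `(a, b, c) ↦ c` maps the triples with `a + b + c = 0` onto `C ∩ (A + B)`,
since `c = -(a + b)`. A degenerate triple has `c = -b ∈ C ∩ B`, `c = -a ∈ C ∩ A` or `c = 0`;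
conversely a triple whose last entry is `u + v` with `u ∈ C ∩ A`, `v ∈ C ∩ B` is the sum of the
degenerate triples `(-u, 0, u)`, `(0, -v, v)` and `(a + u, b + v, 0)`. So the preimage of
`(C ∩ A) + (C ∩ B)` is exactly the subgroup generated by the degenerate triples.
-/

section SumZeroTriples

variable {H : Type*} [AddCommGroup H] (A B C : AddSubgroup H)

def sumZeroTriples : AddSubgroup (H × H × H) where
  carrier := {p | p.1 ∈ A ∧ p.2.1 ∈ B ∧ p.2.2 ∈ C ∧ p.1 + p.2.1 + p.2.2 = 0}
  add_mem' := by
    rintro p q ⟨hpa, hpb, hpc, hp⟩ ⟨hqa, hqb, hqc, hq⟩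
    refine ⟨add_mem hpa hqa, add_mem hpb hqb, add_mem hpc hqc, ?_⟩
    calc p.1 + q.1 + (p.2.1 + q.2.1) + (p.2.2 + q.2.2)
        = (p.1 + p.2.1 + p.2.2) + (q.1 + q.2.1 + q.2.2) := by abel
      _ = 0 := by rw [hp, hq, add_zero]
  zero_mem' := ⟨zero_mem A, zero_mem B, zero_mem C, by simp⟩
  neg_mem' := by
    rintro p ⟨ha, hb, hc, h⟩
    refine ⟨neg_mem ha, neg_mem hb, neg_mem hc, ?_⟩
    simp only [Prod.fst_neg, Prod.snd_neg, ← neg_add, h, neg_zero]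

def degenerateTriples : AddSubgroup (H × H × H) :=
  AddSubgroup.closure {p | p ∈ sumZeroTriples A B C ∧ (p.1 = 0 ∨ p.2.1 = 0 ∨ p.2.2 = 0)}

variable {A B C}

theorem mem_sumZeroTriples_of_eq {a b c : H} (ha : a ∈ A) (hb : b ∈ B) (hc : c ∈ C)
    (h : a + b + c = 0) : (a, b, c) ∈ sumZeroTriples A B C :=
  ⟨ha, hb, hc, h⟩

theorem mem_degenerateTriples_of_eq {a b c : H} (ha : a ∈ A) (hb : b ∈ B) (hc : c ∈ C)
    (h : a + b + c = 0) (h0 : a = 0 ∨ b = 0 ∨ c = 0) : (a, b, c) ∈ degenerateTriples A B C :=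
  AddSubgroup.subset_closure ⟨⟨ha, hb, hc, h⟩, h0⟩

theorem third_mem_inf_sup {p : H × H × H} (hp : p ∈ sumZeroTriples A B C) :
    p.2.2 ∈ C ⊓ (A ⊔ B) := by
  obtain ⟨ha, hb, hc, h⟩ := hp
  refine AddSubgroup.mem_inf.mpr ⟨hc, ?_⟩
  rw [eq_neg_of_add_eq_zero_right h]
  exact neg_mem (add_mem (AddSubgroup.mem_sup_left ha) (AddSubgroup.mem_sup_right hb))

theorem third_mem_sup_inf_of_mem_degenerateTriples {p : H × H × H}
    (hp : p ∈ degenerateTriples A B C) : p.2.2 ∈ (C ⊓ A) ⊔ (C ⊓ B) := by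
  suffices degenerateTriples A B C ≤ ((C ⊓ A) ⊔ (C ⊓ B)).comap
      ((AddMonoidHom.snd H H).comp (AddMonoidHom.snd H (H × H))) from this hp
  rw [degenerateTriples, AddSubgroup.closure_le]
  rintro ⟨a, b, c⟩ ⟨⟨ha, hb, hc, h : a + b + c = 0⟩, h0⟩
  change c ∈ (C ⊓ A) ⊔ (C ⊓ B)
  rcases h0 with rfl | rfl | rfl
  · rw [zero_add, add_eq_zero_iff_eq_neg'] at h
    exact AddSubgroup.mem_sup_right (AddSubgroup.mem_inf.mpr ⟨hc, h ▸ neg_mem hb⟩)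
  · rw [add_zero, add_eq_zero_iff_eq_neg'] at h
    exact AddSubgroup.mem_sup_left (AddSubgroup.mem_inf.mpr ⟨hc, h ▸ neg_mem ha⟩)
  · exact zero_mem _

theorem mem_degenerateTriples_of_third_mem_sup_inf {p : H × H × H}
    (hp : p ∈ sumZeroTriples A B C) (hc : p.2.2 ∈ (C ⊓ A) ⊔ (C ⊓ B)) :
    p ∈ degenerateTriples A B C := by
  obtain ⟨a, b, c⟩ := p
  obtain ⟨ha, hb, -, h : a + b + c = 0⟩ := hp
  obtain ⟨u, ⟨huC, huA⟩, v, ⟨hvC, hvB⟩, rfl⟩ := AddSubgroup.mem_sup.mp hc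
  have hu : (-u, 0, u) ∈ degenerateTriples A B C :=
    mem_degenerateTriples_of_eq (neg_mem huA) (zero_mem B) huC (by abel) (by simp)
  have hv : (0, -v, v) ∈ degenerateTriples A B C :=
    mem_degenerateTriples_of_eq (zero_mem A) (neg_mem hvB) hvC (by abel) (by simp)
  have hab : (a + u, b + v, 0) ∈ degenerateTriples A B C :=
    mem_degenerateTriples_of_eq (add_mem ha huA) (add_mem hb hvB) (zero_mem C)
      (by rw [add_zero, ← h]; abel) (by simp)
  have hsum : (a, b, u + v) = (-u, 0, u) + (0, -v, v) + (a + u, b + v, 0) := by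
    ext <;> simp
  rw [hsum]
  exact add_mem (add_mem hu hv) hab

variable (A B C) in
def sumZeroTriples.third : ↥(sumZeroTriples A B C) →+ ↥(C ⊓ (A ⊔ B)) :=
  (((AddMonoidHom.snd H H).comp (AddMonoidHom.snd H (H × H))).comp
    (sumZeroTriples A B C).subtype).codRestrict _ fun p => third_mem_inf_sup p.2

theorem sumZeroTriples.third_surjective : Function.Surjective (third A B C) := by
  rintro ⟨c, hcC, hcAB⟩
  obtain ⟨a, ha, b, hb, rfl⟩ := AddSubgroup.mem_sup.mp hcAB
  exact ⟨⟨(-a, -b, a + b), mem_sumZeroTriples_of_eq (neg_mem ha) (neg_mem hb) hcC (by abel)⟩,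
    rfl⟩

theorem sumZeroTriples.ker_mk_comp_third :
    ((QuotientAddGroup.mk' (((C ⊓ A) ⊔ (C ⊓ B)).addSubgroupOf (C ⊓ (A ⊔ B)))).comp
      (third A B C)).ker =
      (degenerateTriples A B C).addSubgroupOf (sumZeroTriples A B C) := by
  ext ⟨p, hp⟩
  rw [AddMonoidHom.mem_ker, AddMonoidHom.comp_apply, QuotientAddGroup.mk'_apply,
    QuotientAddGroup.eq_zero_iff, AddSubgroup.mem_addSubgroupOf, AddSubgroup.mem_addSubgroupOf]
  exact ⟨mem_degenerateTriples_of_third_mem_sup_inf hp,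
    third_mem_sup_inf_of_mem_degenerateTriples⟩

end SumZeroTriples

/-- For subgroups `A`, `B`, `C` of an abelian group `H`, with
`G = {(a,b,c) ∈ A × B × C | a + b + c = 0}` and `N ≤ G` generated by the triples with
`a = 0`, those with `b = 0`, and those with `c = 0`, the map `(a,b,c) ↦ c` induces an
isomorphism `G/N ≃ (C ∩ (A+B)) / ((C ∩ A) + (C ∩ B))`. -/
theorem stmt_0 (H : Type*) [AddCommGroup H] (A B C : AddSubgroup H)
    (G N : AddSubgroup (H × H × H))
    (hG : ∀ p : H × H × H,
      p ∈ G ↔ p.1 ∈ A ∧ p.2.1 ∈ B ∧ p.2.2 ∈ C ∧ p.1 + p.2.1 + p.2.2 = 0)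
    (hN : N = AddSubgroup.closure
      {p : H × H × H | p ∈ G ∧ (p.1 = 0 ∨ p.2.1 = 0 ∨ p.2.2 = 0)}) :
    ∃ e : (↥G ⧸ N.addSubgroupOf G) ≃+
        (↥(C ⊓ (A ⊔ B)) ⧸ ((C ⊓ A) ⊔ (C ⊓ B)).addSubgroupOf (C ⊓ (A ⊔ B))),
      ∀ (p : H × H × H) (hp : p ∈ G) (hp' : p.2.2 ∈ C ⊓ (A ⊔ B)),
        e (QuotientAddGroup.mk ⟨p, hp⟩) = QuotientAddGroup.mk ⟨p.2.2, hp'⟩ := by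
  obtain rfl : G = sumZeroTriples A B C := AddSubgroup.ext hG
  obtain rfl : N = degenerateTriples A B C := hN
  refine ⟨(QuotientAddGroup.quotientAddEquivOfEq sumZeroTriples.ker_mk_comp_third.symm).trans
    (QuotientAddGroup.quotientKerEquivOfSurjective _
      ((QuotientAddGroup.mk'_surjective _).comp sumZeroTriples.third_surjective)),
    fun _ _ _ => rfl⟩
end

section
/- Let H be a free ℤ-module of finite rank equipped with an alternating ℤ-bilinear form ω : H × H → ℤ that is unimodular, i.e. the map H → Hom_ℤ(H, ℤ) sending x to ω(x, ·) is a ℤ-module isomorphism. Let A and B be submodules of H with A = A^⊥ and B = B^⊥, and suppose the quotient H/(A+B) is torsion-free. Then (A ∩ B)^⊥ = A + B; equivalently, for every x ∈ H, one has ω(y, x) = 0 for all y ∈ A ∩ B if and only if x ∈ A + B. -/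
/-!
The sum `A + B` has orthogonal `A^⊥ ∩ B^⊥ = A ∩ B`, so the claim is that `A + B` equals its
double orthogonal. One inclusion holds for any reflexive form. For the other, a vector `x ∉ A + B`
is detected by a functional vanishing on `A + B`, because `H/(A+B)` is finitely generated and
torsion-free over `ℤ`, hence free; unimodularity writes this functional as `ω z` with
`z ∈ (A + B)^⊥`, and then `ω z x ≠ 0` shows `x ∉ (A + B)^⊥⊥`.
-/

namespace Submodule

theorem dualAnnihilator_dualCoannihilator_eq_of_projective {R M : Type*} [CommRing R]
    [AddCommGroup M] [Module R M] (P : Submodule R M) [Module.Projective R (M ⧸ P)] :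
    P.dualAnnihilator.dualCoannihilator = P := by
  refine le_antisymm (fun x hx => ?_) P.le_dualAnnihilator_dualCoannihilator
  by_contra hxP
  obtain ⟨f, hfx, hfP⟩ := P.exists_dual_map_eq_bot_of_notMem hxP inferInstance
  exact hfx ((mem_dualCoannihilator x).1 hx f
    ((mem_dualAnnihilator f).2 fun p hp => LinearMap.le_ker_iff_map.2 hfP hp))

theorem dualAnnihilator_dualCoannihilator_eq_of_noZeroSMulDivisors_int {H : Type*}
    [AddCommGroup H] [inst : Module ℤ H] [Module.Finite ℤ H] (P : Submodule ℤ H)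
    [NoZeroSMulDivisors ℤ (H ⧸ P)] : P.dualAnnihilator.dualCoannihilator = P := by
  -- `NoZeroSMulDivisors` sees the canonical `ℤ`-action on `H ⧸ P`, while `Module.Projective`
  -- below uses `Submodule.Quotient.module`; they agree once `inst` is the canonical action.
  obtain rfl : inst = AddCommGroup.toIntModule H := Subsingleton.elim _ _
  have : Module.Free ℤ (H ⧸ P) := Module.free_of_finite_type_torsion_free'
  exact P.dualAnnihilator_dualCoannihilator_eq_of_projective

end Submodule

namespace LinearMap.BilinForm

variable {R M : Type*} [CommRing R] [AddCommGroup M] [Module R M] (B : LinearMap.BilinForm R M)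

theorem orthogonal_sup (N L : Submodule R M) :
    B.orthogonal (N ⊔ L) = B.orthogonal N ⊓ B.orthogonal L := by
  refine le_antisymm (le_inf (orthogonal_le le_sup_left) (orthogonal_le le_sup_right)) ?_
  rintro x ⟨hxN, hxL⟩ y hy
  obtain ⟨n, hn, l, hl, rfl⟩ := Submodule.mem_sup.1 hy
  simp [hxN n hn, hxL l hl]

theorem orthogonal_orthogonal_le_dualAnnihilator_dualCoannihilator (hrefl : B.IsRefl)
    (hsurj : Function.Surjective B) (P : Submodule R M) :
    B.orthogonal (B.orthogonal P) ≤ P.dualAnnihilator.dualCoannihilator := by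
  intro x hx
  rw [Submodule.mem_dualCoannihilator]
  intro f hf
  obtain ⟨z, rfl⟩ := hsurj f
  exact hx z fun p hp => hrefl z p ((Submodule.mem_dualAnnihilator _).1 hf p hp)

end LinearMap.BilinForm

theorem stmt_2_general (H : Type*) [AddCommGroup H] [Module ℤ H]
    [Module.Finite ℤ H]
    (ω : LinearMap.BilinForm ℤ H) (halt : ∀ x : H, ω x x = 0)
    (hunimod : Function.Bijective fun x : H => (ω x : H →ₗ[ℤ] ℤ))
    (A B : Submodule ℤ H)
    (hA : ∀ x : H, x ∈ A ↔ ∀ a ∈ A, ω a x = 0)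
    (hB : ∀ x : H, x ∈ B ↔ ∀ b ∈ B, ω b x = 0)
    (htf : NoZeroSMulDivisors ℤ (H ⧸ (A ⊔ B))) :
    ∀ x : H, (∀ y ∈ A ⊓ B, ω y x = 0) ↔ x ∈ A ⊔ B := by
  have hrefl : ω.IsRefl := LinearMap.IsAlt.isRefl halt
  have hA' : ω.orthogonal A = A := by ext x; exact (hA x).symm
  have hB' : ω.orthogonal B = B := by ext x; exact (hB x).symm
  have hinf : ω.orthogonal (A ⊓ B) = ω.orthogonal (ω.orthogonal (A ⊔ B)) := by
    rw [LinearMap.BilinForm.orthogonal_sup, hA', hB']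
  have hclosed : ω.orthogonal (ω.orthogonal (A ⊔ B)) = A ⊔ B := by
    refine le_antisymm ?_ (LinearMap.BilinForm.le_orthogonal_orthogonal hrefl)
    calc ω.orthogonal (ω.orthogonal (A ⊔ B))
        ≤ (A ⊔ B).dualAnnihilator.dualCoannihilator :=
          ω.orthogonal_orthogonal_le_dualAnnihilator_dualCoannihilator hrefl hunimod.2 _
      _ = A ⊔ B := (A ⊔ B).dualAnnihilator_dualCoannihilator_eq_of_noZeroSMulDivisors_int
  exact fun x => Submodule.ext_iff.1 (hinf.trans hclosed) x

/-- Let `H` be a finite-rank free `ℤ`-module with an alternating, unimodular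
bilinear form `ω`, and let `A`, `B` be submodules with `A = A^⊥`, `B = B^⊥`. If
`H/(A+B)` is torsion-free, then `(A ∩ B)^⊥ = A + B`: for all `x ∈ H`,
`ω(y,x) = 0` for all `y ∈ A ∩ B` iff `x ∈ A + B`. -/
theorem stmt_2 (H : Type*) [AddCommGroup H] [Module ℤ H]
    [Module.Free ℤ H] [Module.Finite ℤ H]
    (ω : LinearMap.BilinForm ℤ H) (halt : ∀ x : H, ω x x = 0)
    (hunimod : Function.Bijective fun x : H => (ω x : H →ₗ[ℤ] ℤ))
    (A B : Submodule ℤ H)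
    (hA : ∀ x : H, x ∈ A ↔ ∀ a ∈ A, ω a x = 0)
    (hB : ∀ x : H, x ∈ B ↔ ∀ b ∈ B, ω b x = 0)
    (htf : NoZeroSMulDivisors ℤ (H ⧸ (A ⊔ B))) :
    ∀ x : H, (∀ y ∈ A ⊓ B, ω y x = 0) ↔ x ∈ A ⊔ B :=
  stmt_2_general H ω halt hunimod A B hA hB htf
end

section
/- Let H be a ℤ-module with a ℤ-bilinear form ω : H × H → ℤ, and let A, B, C be isotropic submodules of H (i.e. ω vanishes on A × A, on B × B, and on C × C). Suppose x, y ∈ H and x′ ∈ A satisfies x − x′ ∈ B. Then: (i) if x ∈ (C ∩ A) + (C ∩ B) and y ∈ C ∩ (A + B), then ω(x′, y) = 0; and (ii) if x ∈ C ∩ (A + B) and y ∈ (C ∩ A) + (C ∩ B), then ω(x′, y) = 0. -/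
/-- For isotropic submodules `A`, `B`, `C` of `(H, ω)` and `x′ ∈ A` with
`x − x′ ∈ B`: (i) if `x ∈ (C∩A)+(C∩B)` and `y ∈ C∩(A+B)` then `ω(x′,y) = 0`; and
(ii) if `x ∈ C∩(A+B)` and `y ∈ (C∩A)+(C∩B)` then `ω(x′,y) = 0`. -/
theorem stmt_4 (H : Type*) [AddCommGroup H] [Module ℤ H]
    (ω : LinearMap.BilinForm ℤ H)
    (A B C : Submodule ℤ H)
    (hA : ∀ a ∈ A, ∀ a' ∈ A, ω a a' = 0)
    (hB : ∀ b ∈ B, ∀ b' ∈ B, ω b b' = 0)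
    (hC : ∀ c ∈ C, ∀ c' ∈ C, ω c c' = 0)
    (x y x' : H) (hx' : x' ∈ A) (hxB : x - x' ∈ B) :
    (x ∈ (C ⊓ A) ⊔ (C ⊓ B) → y ∈ C ⊓ (A ⊔ B) → ω x' y = 0) ∧
    (x ∈ C ⊓ (A ⊔ B) → y ∈ (C ⊓ A) ⊔ (C ⊓ B) → ω x' y = 0) := by
  constructor
  · rintro hx ⟨hyC, hyAB⟩
    obtain ⟨p, ⟨hpC, hpA⟩, q, ⟨hqC, hqB⟩, hpq⟩ := Submodule.mem_sup.1 hx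
    obtain ⟨a, haA, b, hbB, hab⟩ := Submodule.mem_sup.1 hyAB
    -- x' = p + q - (x - x')
    have hx'eq : x' = p + q - (x - x') := by rw [hpq]; abel
    have h1 : ω x' a = 0 := hA _ hx' _ haA
    have h2 : ω x' b = ω p b := by
      rw [hx'eq]
      simp only [map_sub, map_add, LinearMap.sub_apply, LinearMap.add_apply]
      have hxb := hB _ hxB _ hbB
      simp only [map_sub, LinearMap.sub_apply] at hxb
      rw [hB _ hqB _ hbB]
      linarith
    have hbeq : b = y - a := by rw [← hab]; abel
    have h3 : ω p b = 0 := by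
      rw [hbeq, map_sub]
      rw [hC _ hpC _ hyC, hA _ hpA _ haA]
      ring
    calc ω x' y = ω x' (a + b) := by rw [hab]
    _ = ω x' a + ω x' b := by simp
    _ = 0 := by rw [h1, h2, h3]; ring
  · rintro ⟨hxC, _⟩ hy
    obtain ⟨p, ⟨hpC, hpA⟩, q, ⟨hqC, hqB⟩, hpq⟩ := Submodule.mem_sup.1 hy
    have hx'eq : x' = x - (x - x') := by abel
    have h1 : ω x' p = 0 := hA _ hx' _ hpA
    have h2 : ω x' q = 0 := by
      rw [hx'eq, map_sub, LinearMap.sub_apply]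
      rw [hC _ hxC _ hqC, hB _ hxB _ hqB]
      ring
    calc ω x' y = ω x' (p + q) := by rw [hpq]
    _ = ω x' p + ω x' q := by simp
    _ = 0 := by rw [h1, h2]; ring
end

section
/- Let H be a ℤ-module with an alternating ℤ-bilinear form ω : H × H → ℤ (so ω(x, x) = 0 for all x), and let A, B, C be isotropic submodules of H (ω vanishes on A × A, B × B, and C × C). Suppose x, y ∈ C ∩ (A + B), and x′, y′ ∈ A satisfy x − x′ ∈ B and y − y′ ∈ B. Then ω(x′, y) = ω(y′, x). -/
/-- Symmetry of the pairing `Φ`: for an alternating form `ω` and isotropic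
submodules `A`, `B`, `C`, if `x, y ∈ C ∩ (A + B)`, `x′, y′ ∈ A`, `x − x′ ∈ B`, and
`y − y′ ∈ B`, then `ω(x′, y) = ω(y′, x)`. -/
theorem stmt_5 (H : Type*) [AddCommGroup H] [Module ℤ H]
    (ω : LinearMap.BilinForm ℤ H) (halt : ∀ x : H, ω x x = 0)
    (A B C : Submodule ℤ H)
    (hA : ∀ a ∈ A, ∀ a' ∈ A, ω a a' = 0)
    (hB : ∀ b ∈ B, ∀ b' ∈ B, ω b b' = 0)
    (hC : ∀ c ∈ C, ∀ c' ∈ C, ω c c' = 0)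
    (x y x' y' : H)
    (hx : x ∈ C ⊓ (A ⊔ B)) (hy : y ∈ C ⊓ (A ⊔ B))
    (hx' : x' ∈ A) (hy' : y' ∈ A)
    (hxB : x - x' ∈ B) (hyB : y - y' ∈ B) :
    ω x' y = ω y' x := by
  have hanti : ∀ u v : H, ω u v = - ω v u := by
    intro u v
    have h := halt (u + v)
    simp only [map_add, LinearMap.add_apply, halt] at h
    linarith
  have h1 : ω x' y' = 0 := hA x' hx' y' hy'
  have h2 : ω (x - x') (y - y') = 0 := hB _ hxB _ hyB
  have h3 : ω x y = 0 := hC x hx.1 y hy.1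
  simp only [map_sub, LinearMap.sub_apply] at h2
  have h4 : ω y' x = - ω x y' := hanti y' x
  linarith
end

section
/- Let H be a ℤ-module with an alternating ℤ-bilinear form ω : H × H → ℤ, and let A, B, C be isotropic submodules of H (ω vanishes on A × A, B × B, and C × C). Then there exists a unique symmetric ℤ-bilinear form Φ̄ on the quotient module (C ∩ (A+B)) / ((C ∩ A) + (C ∩ B)) such that for all x, y ∈ C ∩ (A + B) and every x′ ∈ A with x − x′ ∈ B, one has Φ̄([x], [y]) = ω(x′, y), where [·] denotes the quotient class. -/
section Aux

variable {H : Type*} [AddCommGroup H] (ω : LinearMap.BilinForm ℤ H)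
variable (A B C : Submodule ℤ H)

lemma aux_ex (x : ↥(C ⊓ (A ⊔ B))) : ∃ a, a ∈ A ∧ (x : H) - a ∈ B := by
  obtain ⟨a, ha, b, hb, hab⟩ := Submodule.mem_sup.mp x.2.2
  exact ⟨a, ha, by rw [← hab]; simpa⟩

noncomputable def auxg (x : ↥(C ⊓ (A ⊔ B))) : H := (aux_ex A B C x).choose

lemma auxg_memA (x : ↥(C ⊓ (A ⊔ B))) : auxg A B C x ∈ A := (aux_ex A B C x).choose_spec.1

lemma auxg_subB (x : ↥(C ⊓ (A ⊔ B))) : (x : H) - auxg A B C x ∈ B :=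
  (aux_ex A B C x).choose_spec.2

lemma aux_skew (halt : ∀ x : H, ω x x = 0) (u v : H) : ω u v = - ω v u := by
  have h := halt (u + v)
  simp only [map_add, LinearMap.add_apply, halt u, halt v] at h
  linarith

variable (hA : ∀ a ∈ A, ∀ a' ∈ A, ω a a' = 0)
variable (hB : ∀ b ∈ B, ∀ b' ∈ B, ω b b' = 0)
variable (hC : ∀ c ∈ C, ∀ c' ∈ C, ω c c' = 0)

include hA hB in
lemma aux_key (x x₁ x₂ : H) (h₁A : x₁ ∈ A) (h₂A : x₂ ∈ A)
    (h₁B : x - x₁ ∈ B) (h₂B : x - x₂ ∈ B) (y : H) (hy : y ∈ A ⊔ B) :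
    ω x₁ y = ω x₂ y := by
  obtain ⟨a, ha, b, hb, rfl⟩ := Submodule.mem_sup.mp hy
  have hd : x₁ - x₂ ∈ A := sub_mem h₁A h₂A
  have hd' : x₁ - x₂ ∈ B := by
    have := sub_mem h₂B h₁B
    have he : (x - x₂) - (x - x₁) = x₁ - x₂ := by abel
    rwa [he] at this
  have h0 : ω (x₁ - x₂) (a + b) = 0 := by
    simp only [map_sub, map_add, LinearMap.sub_apply]
    have h1 := hA _ hd _ ha
    have h2 := hB _ hd' _ hb
    have h3 := hA _ h₁A _ ha
    have h4 := hA _ h₂A _ ha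
    simp only [map_sub, LinearMap.sub_apply] at h1 h2
    linarith
  simp only [map_sub, LinearMap.sub_apply] at h0
  linarith

include hA hB hC in
lemma aux_symm (halt : ∀ x : H, ω x x = 0) (x y : ↥(C ⊓ (A ⊔ B))) :
    ω (auxg A B C x) (y : H) = ω (auxg A B C y) (x : H) := by
  set x' := auxg A B C x with hx'
  set y' := auxg A B C y with hy'
  have hxy : ω (x : H) (y : H) = 0 := hC _ x.2.1 _ y.2.1
  have hsplit : ((x : H) : H) = x' + ((x : H) - x') := by abel
  have hsplity : ((y : H) : H) = y' + ((y : H) - y') := by abel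
  have h1 : ω x' y' = 0 := hA _ (auxg_memA A B C x) _ (auxg_memA A B C y)
  have h2 : ω ((x : H) - x') ((y : H) - y') = 0 :=
    hB _ (auxg_subB A B C x) _ (auxg_subB A B C y)
  have hexp : ω x' y' + ω x' ((y:H) - y') + ω ((x:H) - x') y' + ω ((x:H) - x') ((y:H) - y') = 0 := by
    have : ω ((x:H)) ((y:H)) = ω (x' + ((x:H) - x')) (y' + ((y:H) - y')) := by rw [← hsplit, ← hsplity]
    rw [hxy] at this
    simp only [map_add, LinearMap.add_apply] at this
    linarith
  have hsk1 : ω y' x' = - ω x' y' := aux_skew ω halt y' x'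
  have hsk2 : ω y' ((x:H) - x') = - ω ((x:H) - x') y' := aux_skew ω halt y' ((x:H) - x')
  have hl : ω x' (y : H) = ω x' y' + ω x' ((y:H) - y') := by
    conv_lhs => rw [hsplity]
    simp [map_add]
  have hr : ω y' (x : H) = ω y' x' + ω y' ((x:H) - x') := by
    conv_lhs => rw [hsplit]
    simp [map_add]
  rw [hl, hr, hsk1, hsk2]
  linarith

include hA hB hC in
lemma aux_vanish (x : ↥(C ⊓ (A ⊔ B))) (hx : (x : H) ∈ (C ⊓ A) ⊔ (C ⊓ B))
    (y : ↥(C ⊓ (A ⊔ B))) : ω (auxg A B C x) (y : H) = 0 := by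
  obtain ⟨ca, hca, cb, hcb, hsum⟩ := Submodule.mem_sup.mp hx
  have h1 : ω (auxg A B C x) (y : H) = ω ca (y : H) := by
    refine aux_key ω A B hA hB (x : H) _ ca (auxg_memA A B C x) hca.2
      (auxg_subB A B C x) ?_ _ y.2.2
    rw [← hsum]
    simpa using hcb.2
  rw [h1]
  exact hC _ hca.1 _ y.2.1

end Aux

/-- For an alternating form `ω` and isotropic submodules `A`, `B`, `C` of the
`ℤ`-module `H`, there is a unique symmetric `ℤ`-bilinear form `Φ̄` on
`(C ∩ (A+B)) / ((C∩A) + (C∩B))` such that `Φ̄([x],[y]) = ω(x′,y)` whenever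
`x, y ∈ C ∩ (A+B)`, `x′ ∈ A`, and `x − x′ ∈ B`. -/
theorem stmt_6 (H : Type*) [AddCommGroup H]
    (ω : LinearMap.BilinForm ℤ H) (halt : ∀ x : H, ω x x = 0)
    (A B C : Submodule ℤ H)
    (hA : ∀ a ∈ A, ∀ a' ∈ A, ω a a' = 0)
    (hB : ∀ b ∈ B, ∀ b' ∈ B, ω b b' = 0)
    (hC : ∀ c ∈ C, ∀ c' ∈ C, ω c c' = 0) :
    ∃! Φ :
        (↥(C ⊓ (A ⊔ B)) ⧸ (((C ⊓ A) ⊔ (C ⊓ B)).comap (C ⊓ (A ⊔ B)).subtype)) →ₗ[ℤ]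
        (↥(C ⊓ (A ⊔ B)) ⧸ (((C ⊓ A) ⊔ (C ⊓ B)).comap (C ⊓ (A ⊔ B)).subtype)) →ₗ[ℤ] ℤ,
      (∀ u v, Φ u v = Φ v u) ∧
      ∀ (x : H) (hx : x ∈ C ⊓ (A ⊔ B)) (y : H) (hy : y ∈ C ⊓ (A ⊔ B))
        (x' : H), x' ∈ A → x - x' ∈ B →
          Φ (Submodule.Quotient.mk ⟨x, hx⟩) (Submodule.Quotient.mk ⟨y, hy⟩) = ω x' y := by
  classical
  set S := C ⊓ (A ⊔ B) with hS
  set N := ((C ⊓ A) ⊔ (C ⊓ B)).comap S.subtype with hN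
  -- the additive map x ↦ (y ↦ ω (auxg x) y)
  have hadd : ∀ x z : ↥S, ∀ y : ↥S,
      ω (auxg A B C (x + z)) (y : H) = ω (auxg A B C x) (y : H) + ω (auxg A B C z) (y : H) := by
    intro x z y
    have hk : ω (auxg A B C (x + z)) (y : H) = ω (auxg A B C x + auxg A B C z) (y : H) := by
      refine aux_key ω A B hA hB ((x : H) + (z : H)) _ _ (auxg_memA A B C (x + z))
        (add_mem (auxg_memA A B C x) (auxg_memA A B C z)) ?_ ?_ _ y.2.2
      · simpa using auxg_subB A B C (x + z)
      · have h1 := auxg_subB A B C x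
        have h2 := auxg_subB A B C z
        have he : (x : H) + (z : H) - (auxg A B C x + auxg A B C z)
            = ((x : H) - auxg A B C x) + ((z : H) - auxg A B C z) := by abel
        rw [he]; exact add_mem h1 h2
    rw [hk]
    simp [map_add]
  let L : ↥S →ₗ[ℤ] (↥S →ₗ[ℤ] ℤ) :=
    AddMonoidHom.toIntLinearMap
      (AddMonoidHom.mk' (fun x => (ω (auxg A B C x)).comp S.subtype)
        (fun x z => by ext y; simpa using hadd x z y))
  have hLapp : ∀ x y : ↥S, L x y = ω (auxg A B C x) (y : H) := fun x y => rfl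
  have hvan : ∀ x : ↥S, x ∈ N → ∀ y : ↥S, L x y = 0 := by
    intro x hx y
    exact aux_vanish ω A B C hA hB hC x hx y
  have hsymm : ∀ x y : ↥S, L x y = L y x := by
    intro x y
    exact aux_symm ω A B C hA hB hC halt x y
  -- lift in the second variable
  let L₂ : ↥S →ₗ[ℤ] ((↥S ⧸ N) →ₗ[ℤ] ℤ) :=
    { toFun := fun x => Submodule.liftQ N (L x)
        (fun z hz => LinearMap.mem_ker.mpr (by
          rw [hLapp, aux_symm ω A B C hA hB hC halt x z]; exact hvan z hz x))
      map_add' := by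
        intro x z
        refine Submodule.linearMap_qext N ?_
        ext y
        simp [Submodule.liftQ_apply, map_add]
      map_smul' := by
        intro c x
        refine Submodule.linearMap_qext N ?_
        ext y
        simp [Submodule.liftQ_apply, map_smul] }
  have h2 : N ≤ LinearMap.ker L₂ := by
    intro x hx
    refine LinearMap.mem_ker.mpr (Submodule.linearMap_qext N ?_)
    ext y
    simpa [L₂, Submodule.liftQ_apply] using hvan x hx y
  refine ⟨Submodule.liftQ N L₂ h2, ⟨?_, ?_⟩, ?_⟩
  · intro u v
    obtain ⟨x, rfl⟩ := Submodule.Quotient.mk_surjective N u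
    obtain ⟨y, rfl⟩ := Submodule.Quotient.mk_surjective N v
    show L x y = L y x
    exact hsymm x y
  · intro x hx y hy x' hx'A hx'B
    show L ⟨x, hx⟩ ⟨y, hy⟩ = ω x' y
    rw [hLapp]
    exact aux_key ω A B hA hB x _ x' (auxg_memA A B C ⟨x, hx⟩) hx'A
      (auxg_subB A B C ⟨x, hx⟩) hx'B y hy.2
  · intro Ψ ⟨_, hspec⟩
    refine LinearMap.ext fun u => LinearMap.ext fun v => ?_
    obtain ⟨x, rfl⟩ := Submodule.Quotient.mk_surjective N u
    obtain ⟨y, rfl⟩ := Submodule.Quotient.mk_surjective N v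
    have h1 := hspec x.1 x.2 y.1 y.2 (auxg A B C x) (auxg_memA A B C x) (auxg_subB A B C x)
    have h2 : (Submodule.liftQ N L₂ h2) (Submodule.Quotient.mk x) (Submodule.Quotient.mk y)
        = ω (auxg A B C x) (y : H) := rfl
    rw [h2]
    simpa using h1
end

section
/- Let H be a ℤ-module with an alternating ℤ-bilinear form ω : H × H → ℤ, and let A, B, C be isotropic submodules of H (ω vanishes on A × A, B × B, and C × C). Let G be the submodule of A × B × C consisting of triples (a,b,c) with a + b + c = 0, and let N be the submodule of G generated by the triples in G with a = 0, those with b = 0, and those with c = 0. Then the pairing on G defined by ⟨(a,b,c), (a′,b′,c′)⟩ = ω(a, b′) is symmetric (i.e. ω(a, b′) = ω(a′, b) for all such triples), and it descends to a well-defined symmetric ℤ-bilinear form on the quotient G/N. -/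
/-- For an alternating form `ω` and isotropic submodules `A`, `B`, `C` of the
`ℤ`-module `H`, with `G = {(a,b,c) ∈ A × B × C | a+b+c=0}` and `N ≤ G` generated by the
triples with `a = 0`, with `b = 0`, and with `c = 0`, the pairing
`⟨(a,b,c),(a′,b′,c′)⟩ = ω(a,b′)` is symmetric on `G` and descends to a well-defined
symmetric `ℤ`-bilinear form on `G/N`. -/
theorem stmt_7 (H : Type*) [AddCommGroup H]
    (ω : LinearMap.BilinForm ℤ H) (halt : ∀ x : H, ω x x = 0)
    (A B C : Submodule ℤ H)
    (hA : ∀ a ∈ A, ∀ a' ∈ A, ω a a' = 0)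
    (hB : ∀ b ∈ B, ∀ b' ∈ B, ω b b' = 0)
    (hC : ∀ c ∈ C, ∀ c' ∈ C, ω c c' = 0)
    (G N : Submodule ℤ (H × H × H))
    (hG : ∀ p : H × H × H,
      p ∈ G ↔ p.1 ∈ A ∧ p.2.1 ∈ B ∧ p.2.2 ∈ C ∧ p.1 + p.2.1 + p.2.2 = 0)
    (hN : N = Submodule.span ℤ
      {p : H × H × H | p ∈ G ∧ (p.1 = 0 ∨ p.2.1 = 0 ∨ p.2.2 = 0)}) :
    (∀ p ∈ G, ∀ q ∈ G, ω p.1 q.2.1 = ω q.1 p.2.1) ∧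
    ∃ Φ : (↥G ⧸ N.comap G.subtype) →ₗ[ℤ] (↥G ⧸ N.comap G.subtype) →ₗ[ℤ] ℤ,
      (∀ u v, Φ u v = Φ v u) ∧
      ∀ (p : H × H × H) (hp : p ∈ G) (q : H × H × H) (hq : q ∈ G),
        Φ (Submodule.Quotient.mk ⟨p, hp⟩) (Submodule.Quotient.mk ⟨q, hq⟩) =
          ω p.1 q.2.1 := by
  -- antisymmetry from alternating
  have hanti : ∀ x y : H, ω x y = - ω y x := by
    intro x y
    have h := halt (x + y)
    simp only [map_add, LinearMap.add_apply, halt] at h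
    linarith
  -- symmetry on G
  have sym : ∀ p ∈ G, ∀ q ∈ G, ω p.1 q.2.1 = ω q.1 p.2.1 := by
    intro p hp q hq
    obtain ⟨ha, hb, hc, hsum⟩ := (hG p).1 hp
    obtain ⟨ha', hb', hc', hsum'⟩ := (hG q).1 hq
    have hcc : ω p.2.2 q.2.2 = 0 := hC _ hc _ hc'
    have hp2 : p.2.2 = -(p.1 + p.2.1) := by linear_combination (norm := abel) hsum
    have hq2 : q.2.2 = -(q.1 + q.2.1) := by linear_combination (norm := abel) hsum'
    rw [hp2, hq2] at hcc
    simp only [map_neg, map_add, LinearMap.neg_apply, LinearMap.add_apply, neg_neg] at hcc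
    have h1 : ω p.1 q.1 = 0 := hA _ ha _ ha'
    have h2 : ω p.2.1 q.2.1 = 0 := hB _ hb _ hb'
    have h3 : ω p.2.1 q.1 = - ω q.1 p.2.1 := hanti _ _
    linarith
  refine ⟨sym, ?_⟩
  -- the bilinear form on G
  set N' := N.comap G.subtype with hN'
  let f : ↥G →ₗ[ℤ] H := (LinearMap.fst ℤ H (H × H)).comp G.subtype
  let g : ↥G →ₗ[ℤ] H :=
    (LinearMap.fst ℤ H H).comp ((LinearMap.snd ℤ H (H × H)).comp G.subtype)
  let b : ↥G →ₗ[ℤ] ↥G →ₗ[ℤ] ℤ := ω.compl₁₂ f g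
  have hb : ∀ p q : ↥G, b p q = ω (p : H × H × H).1 (q : H × H × H).2.1 := by
    intro p q; rfl
  -- vanishing on generators
  have key : ∀ x ∈ N, ∀ q : ↥G,
      ω x.1 (q : H × H × H).2.1 = 0 ∧ ω (q : H × H × H).1 x.2.1 = 0 := by
    intro x hx
    rw [hN] at hx
    induction hx using Submodule.span_induction with
    | mem x hx =>
      obtain ⟨hxG, hcase⟩ := hx
      intro q
      have hsymq := sym x hxG q q.2
      obtain ⟨hxa, hxb, hxc, hxsum⟩ := (hG x).1 hxG
      obtain ⟨hqa, hqb, hqc, _⟩ := (hG (q : H × H × H)).1 q.2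
      rcases hcase with h0 | h0 | h0
      · constructor
        · rw [h0]; simp
        · rw [← hsymq, h0]; simp
      · constructor
        · rw [hsymq, h0]; simp
        · rw [h0]; simp
      · have hx21 : x.2.1 = -x.1 := by
          rw [h0, add_zero] at hxsum
          linear_combination (norm := abel) hxsum
        constructor
        · have hx1B : x.1 ∈ B := by
            have : -x.1 ∈ B := hx21 ▸ hxb
            simpa using (Submodule.neg_mem _ this)
          exact hB _ hx1B _ hqb
        · have hx21A : x.2.1 ∈ A := by
            rw [hx21]; exact Submodule.neg_mem _ hxa
          exact hA _ hqa _ hx21A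
    | zero => intro q; simp
    | add x y _ _ hx hy =>
      intro q
      obtain ⟨h1, h2⟩ := hx q
      obtain ⟨h3, h4⟩ := hy q
      constructor <;> simp [Prod.fst_add, Prod.snd_add, map_add, h1, h2, h3, h4]
    | smul r x _ hx =>
      intro q
      obtain ⟨h1, h2⟩ := hx q
      constructor <;>
        simp [Prod.smul_fst, Prod.smul_snd, map_smul, h1, h2]
  have hker1 : N' ≤ LinearMap.ker b := by
    intro n hn
    have := key (n : H × H × H) hn
    ext q
    simpa [hb] using (this q).1
  let b₁ : (↥G ⧸ N') →ₗ[ℤ] ↥G →ₗ[ℤ] ℤ := N'.liftQ b hker1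
  have hker2 : N' ≤ LinearMap.ker b₁.flip := by
    intro n hn
    have := key (n : H × H × H) hn
    ext p
    show b₁ (Submodule.Quotient.mk p) n = 0
    rw [show b₁ (Submodule.Quotient.mk p) = b p from rfl]
    simpa [hb] using (this p).2
  let Φ : (↥G ⧸ N') →ₗ[ℤ] (↥G ⧸ N') →ₗ[ℤ] ℤ := (N'.liftQ b₁.flip hker2).flip
  have hΦ : ∀ (p : H × H × H) (hp : p ∈ G) (q : H × H × H) (hq : q ∈ G),
      Φ (Submodule.Quotient.mk ⟨p, hp⟩) (Submodule.Quotient.mk ⟨q, hq⟩) = ω p.1 q.2.1 := by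
    intro p hp q hq; rfl
  refine ⟨Φ, ?_, hΦ⟩
  intro u v
  induction u using Submodule.Quotient.induction_on with
  | _ p =>
    induction v using Submodule.Quotient.induction_on with
    | _ q =>
      rw [hΦ p p.2 q q.2, hΦ q q.2 p p.2]
      exact sym p p.2 q q.2
end

section
/- Let H be a ℤ-module with an alternating ℤ-bilinear form ω : H × H → ℤ, and let A, B, C be isotropic submodules of H (ω vanishes on A × A, B × B, and C × C). Suppose (a,b,c) and (a′,b′,c′) are triples in A × B × C with a + b + c = 0 and a′ + b′ + c′ = 0. Then for every x′ ∈ A with c − x′ ∈ B, one has ω(x′, c′) = ω(a, b′). -/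
/-- For an alternating form `ω` and isotropic submodules `A`, `B`, `C`, if
`(a,b,c), (a′,b′,c′) ∈ A × B × C` satisfy `a+b+c = 0` and `a′+b′+c′ = 0`, then for every
`x′ ∈ A` with `c − x′ ∈ B` one has `ω(x′, c′) = ω(a, b′)`. -/
theorem stmt_8 (H : Type*) [AddCommGroup H] [Module ℤ H]
    (ω : LinearMap.BilinForm ℤ H) (halt : ∀ x : H, ω x x = 0)
    (A B C : Submodule ℤ H)
    (hA : ∀ a ∈ A, ∀ a' ∈ A, ω a a' = 0)
    (hB : ∀ b ∈ B, ∀ b' ∈ B, ω b b' = 0)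
    (hC : ∀ c ∈ C, ∀ c' ∈ C, ω c c' = 0)
    (a b c a' b' c' : H)
    (ha : a ∈ A) (hb : b ∈ B) (hc : c ∈ C)
    (ha' : a' ∈ A) (hb' : b' ∈ B) (hc' : c' ∈ C)
    (hsum : a + b + c = 0) (hsum' : a' + b' + c' = 0) :
    ∀ x' ∈ A, c - x' ∈ B → ω x' c' = ω a b' := by
  intro x' hx' hxb
  have h1 : ω x' a' = 0 := hA x' hx' a' ha'
  have h2 : ω (c - x') b' = 0 := hB _ hxb b' hb'
  have h3 : ω b b' = 0 := hB b hb b' hb'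
  have k1 : ω x' (a' + b' + c') = 0 := by rw [hsum', map_zero]
  have k2 : ω (a + b + c) b' = 0 := by rw [hsum]; simp
  simp only [map_add, map_sub, LinearMap.add_apply, LinearMap.sub_apply] at k1 k2 h2
  linarith
end

section
/- Let H be a free ℤ-module with an alternating ℤ-bilinear form ω : H × H → ℤ. Let A, B, C be submodules, with B = B^⊥ where S^⊥ = {x ∈ H : ω(s, x) = 0 for all s ∈ S}. Let α₁, …, α_g generate A, β₁, …, β_g generate B, and γ₁, …, γ_g generate C, and define the g × g integer matrices (_αQ_β)ᵢⱼ = ω(αᵢ, βⱼ), (_βQ_α)ᵢⱼ = ω(βᵢ, αⱼ), (_αQ_γ)ᵢⱼ = ω(αᵢ, γⱼ), (_βQ_γ)ᵢⱼ = ω(βᵢ, γⱼ), and (_γQ_β)ᵢⱼ = ω(γᵢ, βⱼ). Assume det(_βQ_α) is a unit in ℤ. Then for all v, w ∈ ℤ^g, setting x = Σᵢ vᵢ γᵢ, y = Σⱼ wⱼ γⱼ, s = (_βQ_α)⁻¹ (_βQ_γ) v, and x′ = Σᵢ sᵢ αᵢ, one has: x′ ∈ A, x − x′ ∈ B, and ω(x′,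 y) = vᵀ · (_γQ_β)(_αQ_β)⁻¹(_αQ_γ) · w. -/
/-!
For `x′ = Σ sᵢαᵢ`, the pairings `ω(βᵢ, x − x′)` are the entries of `_βQ_γ v − _βQ_α s`, which
vanishes by the choice of `s`; so `x − x′` pairs trivially with `B` and lies in `B = B^⊥`.
Moreover `ω(x′, y) = sᵀ (_αQ_γ) w`, and as `ω` is alternating, `_γQ_β = −(_βQ_γ)ᵀ` and
`_αQ_β = −(_βQ_α)ᵀ`, whence `sᵀ = vᵀ (_βQ_γ)ᵀ ((_βQ_α)⁻¹)ᵀ = vᵀ (_γQ_β)(_αQ_β)⁻¹`.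
-/

namespace Matrix

variable {n α : Type*} [Fintype n] [DecidableEq n] [CommRing α]

theorem nonsing_inv_neg {A : Matrix n n α} (h : IsUnit A.det) : (-A)⁻¹ = -A⁻¹ :=
  inv_eq_left_inv (by rw [neg_mul_neg, nonsing_inv_mul A h])

end Matrix

open Matrix

namespace LinearMap.BilinForm

variable {R M ι κ : Type*} [CommRing R] [AddCommGroup M] [Module R M]
  (ω : LinearMap.BilinForm R M)

def intersectionMatrix (a : ι → M) (c : κ → M) : Matrix ι κ R :=
  Matrix.of fun i j => ω (a i) (c j)

theorem apply_eq_zero_of_mem_span {a : ι → M} {x : M} (h : ∀ i, ω (a i) x = 0) {y : M}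
    (hy : y ∈ Submodule.span R (Set.range a)) : ω y x = 0 :=
  LinearMap.eqOn_span' (f := ω.flip x) (g := 0) (by rintro _ ⟨i, rfl⟩; exact h i) hy

section Finite

variable [Fintype κ]

theorem intersectionMatrix_mulVec_apply (a : ι → M) (c : κ → M) (w : κ → R) (i : ι) :
    (ω.intersectionMatrix a c *ᵥ w) i = ω (a i) (∑ j, w j • c j) := by
  simp [intersectionMatrix, Matrix.mulVec, dotProduct, mul_comm]

theorem apply_sum_smul_sum_smul [Fintype ι] (a : ι → M) (c : κ → M) (s : ι → R) (w : κ → R) :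
    ω (∑ i, s i • a i) (∑ j, w j • c j) = s ⬝ᵥ (ω.intersectionMatrix a c *ᵥ w) := by
  simp only [map_sum ω, LinearMap.sum_apply, map_smul, LinearMap.smul_apply, smul_eq_mul,
    dotProduct, intersectionMatrix_mulVec_apply]

end Finite

namespace IsAlt

variable {ω}

theorem intersectionMatrix_swap (h : ω.IsAlt) (a : ι → M) (c : κ → M) :
    ω.intersectionMatrix c a = -(ω.intersectionMatrix a c)ᵀ := by
  ext i j
  exact (LinearMap.IsAlt.neg h (a j) (c i)).symm

theorem intersectionMatrix_mul_inv [Fintype ι] [DecidableEq ι] (h : ω.IsAlt) (a b : ι → M)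
    (c : κ → M) (hba : IsUnit (ω.intersectionMatrix b a).det) :
    ω.intersectionMatrix c b * (ω.intersectionMatrix a b)⁻¹ =
      ((ω.intersectionMatrix b a)⁻¹ * ω.intersectionMatrix b c)ᵀ := by
  rw [h.intersectionMatrix_swap b c, h.intersectionMatrix_swap b a,
    nonsing_inv_neg (isUnit_det_transpose _ hba), Matrix.neg_mul, Matrix.mul_neg, neg_neg,
    ← transpose_nonsing_inv,
    transpose_mul]

end IsAlt

end LinearMap.BilinForm

open LinearMap.BilinForm

theorem stmt_11_general (H : Type*) [AddCommGroup H] [Module ℤ H] (g : ℕ)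
    (ω : LinearMap.BilinForm ℤ H) (halt : ∀ x : H, ω x x = 0)
    (A B : Submodule ℤ H)
    (hB : ∀ x : H, x ∈ B ↔ ∀ b ∈ B, ω b x = 0)
    (α β γ : Fin g → H)
    (hαA : A = Submodule.span ℤ (Set.range α))
    (hβB : B = Submodule.span ℤ (Set.range β))
    (Qαβ Qβα Qαγ Qβγ Qγβ : Matrix (Fin g) (Fin g) ℤ)
    (hQαβ : ∀ i j, Qαβ i j = ω (α i) (β j))
    (hQβα : ∀ i j, Qβα i j = ω (β i) (α j))
    (hQαγ : ∀ i j, Qαγ i j = ω (α i) (γ j))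
    (hQβγ : ∀ i j, Qβγ i j = ω (β i) (γ j))
    (hQγβ : ∀ i j, Qγβ i j = ω (γ i) (β j))
    (hdet : IsUnit Qβα.det) :
    ∀ v w : Fin g → ℤ,
      (∑ i, (Qβα⁻¹.mulVec (Qβγ.mulVec v)) i • α i) ∈ A ∧
      (∑ i, v i • γ i) - (∑ i, (Qβα⁻¹.mulVec (Qβγ.mulVec v)) i • α i) ∈ B ∧
      ω (∑ i, (Qβα⁻¹.mulVec (Qβγ.mulVec v)) i • α i) (∑ j, w j • γ j) =
        dotProduct v ((Qγβ * Qαβ⁻¹ * Qαγ).mulVec w) := by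
  -- the `•` in the statement is the `ℤ`-action of the additive group, which `ω` is linear for
  -- only once the `Module ℤ H` instance is identified with it
  obtain rfl : ‹Module ℤ H› = AddCommGroup.toIntModule H := Subsingleton.elim _ _
  obtain rfl : Qαβ = ω.intersectionMatrix α β := Matrix.ext hQαβ
  obtain rfl : Qβα = ω.intersectionMatrix β α := Matrix.ext hQβα
  obtain rfl : Qαγ = ω.intersectionMatrix α γ := Matrix.ext hQαγ
  obtain rfl : Qβγ = ω.intersectionMatrix β γ := Matrix.ext hQβγ
  obtain rfl : Qγβ = ω.intersectionMatrix γ β := Matrix.ext hQγβ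
  intro v w
  set s := (ω.intersectionMatrix β α)⁻¹ *ᵥ (ω.intersectionMatrix β γ *ᵥ v)
  have hs : ω.intersectionMatrix β α *ᵥ s = ω.intersectionMatrix β γ *ᵥ v := by
    rw [mulVec_mulVec, mul_nonsing_inv _ hdet, one_mulVec]
  refine ⟨hαA ▸ (Submodule.mem_span_range_iff_exists_fun ℤ).2 ⟨s, rfl⟩, ?_, ?_⟩
  · refine (hB _).2 fun b hb => apply_eq_zero_of_mem_span ω (fun i => ?_) (hβB ▸ hb)
    rw [map_sub, ← intersectionMatrix_mulVec_apply, ← intersectionMatrix_mulVec_apply, hs,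
      sub_self]
  · have hω : ω.IsAlt := halt
    rw [apply_sum_smul_sum_smul, hω.intersectionMatrix_mul_inv α β γ hdet, ← mulVec_mulVec,
      dotProduct_transpose_mulVec, dotProduct_comm, ← mulVec_mulVec]

/-- Proposition `LovelyProduct`: with `B = B^⊥`, generators `α`, `β`, `γ`
of `A`, `B`, `C`, intersection matrices as indicated, and `det(_βQ_α)` a unit, for all
`v, w ∈ ℤ^g`, setting `x = Σ vᵢγᵢ`, `y = Σ wⱼγⱼ`, `s = (_βQ_α)⁻¹(_βQ_γ)v`, and
`x′ = Σ sᵢαᵢ`, one has `x′ ∈ A`, `x − x′ ∈ B`, and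
`ω(x′,y) = vᵀ·(_γQ_β)(_αQ_β)⁻¹(_αQ_γ)·w`. -/
theorem stmt_11 (H : Type*) [AddCommGroup H] [Module ℤ H] [Module.Free ℤ H] (g : ℕ)
    (ω : LinearMap.BilinForm ℤ H) (halt : ∀ x : H, ω x x = 0)
    (A B C : Submodule ℤ H)
    (hB : ∀ x : H, x ∈ B ↔ ∀ b ∈ B, ω b x = 0)
    (α β γ : Fin g → H)
    (hαA : A = Submodule.span ℤ (Set.range α))
    (hβB : B = Submodule.span ℤ (Set.range β))
    (hγC : C = Submodule.span ℤ (Set.range γ))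
    (Qαβ Qβα Qαγ Qβγ Qγβ : Matrix (Fin g) (Fin g) ℤ)
    (hQαβ : ∀ i j, Qαβ i j = ω (α i) (β j))
    (hQβα : ∀ i j, Qβα i j = ω (β i) (α j))
    (hQαγ : ∀ i j, Qαγ i j = ω (α i) (γ j))
    (hQβγ : ∀ i j, Qβγ i j = ω (β i) (γ j))
    (hQγβ : ∀ i j, Qγβ i j = ω (γ i) (β j))
    (hdet : IsUnit Qβα.det) :
    ∀ v w : Fin g → ℤ,
      (∑ i, (Qβα⁻¹.mulVec (Qβγ.mulVec v)) i • α i) ∈ A ∧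
      (∑ i, v i • γ i) - (∑ i, (Qβα⁻¹.mulVec (Qβγ.mulVec v)) i • α i) ∈ B ∧
      ω (∑ i, (Qβα⁻¹.mulVec (Qβγ.mulVec v)) i • α i) (∑ j, w j • γ j) =
        dotProduct v ((Qγβ * Qαβ⁻¹ * Qαγ).mulVec w) :=
  stmt_11_general H g ω halt A B hB α β γ hαA hβB Qαβ Qβα Qαγ Qβγ Qγβ hQαβ hQβα hQαγ hQβγ hQγβ hdet
end

section
/- Let H be a free ℤ-module with an alternating ℤ-bilinear form ω : H × H → ℤ. Let A, B, C be submodules, with B = B^⊥ where S^⊥ = {x ∈ H : ω(s, x) = 0 for all s ∈ S}. Let α₁, …, α_g generate A, β₁, …, β_g generate B, and γ₁, …, γ_g generate C, and define the g × g integer matrices (_αQ_γ)ᵢⱼ = ω(αᵢ, γⱼ), (_βQ_γ)ᵢⱼ = ω(βᵢ, γⱼ), and (_γQ_β)ᵢⱼ = ω(γᵢ, βⱼ). Let I_g^{g−k} denote the g × g matrix that is the identity in its upper-left (g−k) × (g−k) block and zero elsewhere, and assume ω(αᵢ, βⱼ) = (I_g^{g−k})ᵢⱼ for all i, j. Let v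 ∈ ℤ^g be such that x = Σᵢ vᵢ γᵢ lies in A + B. Then, setting s = −I_g^{g−k} (_βQ_γ) v and x′ = Σᵢ sᵢ αᵢ, one has: x′ ∈ A, x − x′ ∈ B, and for every w ∈ ℤ^g, ω(x′, Σⱼ wⱼ γⱼ) = vᵀ · (_γQ_β) I_g^{g−k} (_αQ_γ) · w. -/
/-!
Write `u = (_βQ_γ) v`, so that `ω(βⱼ, x) = uⱼ`. For `j` outside the identity block, `βⱼ` is
orthogonal to every `αᵢ` and, `B` being isotropic, to all of `B`; hence `x ∈ A + B` forces
`uⱼ = 0` there, i.e. `I u = u` and `x′ = -Σ uᵢ αᵢ`. Then `ω(βⱼ, x′) = uⱼ` as well, so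
`x - x′ ∈ B^⊥ = B`. Finally skew-symmetry gives `_γQ_β = -(_βQ_γ)ᵀ`, so
`vᵀ (_γQ_β) I = -(I u)ᵀ = sᵀ` and both sides of the last claim equal `s ⬝ (_αQ_γ) w`.
-/

open Matrix

namespace Matrix

variable {ι R : Type*} [Fintype ι] [DecidableEq ι] [Semiring R]

theorem diagonal_ite_one_zero_mulVec {p : ι → Prop} [DecidablePred p] {u : ι → R}
    (hu : ∀ i, ¬ p i → u i = 0) : diagonal (fun i => if p i then 1 else 0) *ᵥ u = u := by
  ext i
  rw [mulVec_diagonal]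
  by_cases hi : p i
  · rw [if_pos hi, one_mul]
  · rw [if_neg hi, zero_mul, hu i hi]

end Matrix

namespace LinearMap.BilinForm

variable {R M ι κ : Type*} [CommRing R] [AddCommGroup M] [Module R M]
  (ω : LinearMap.BilinForm R M) {δ : ι → M} {ε : κ → M} {Q : Matrix ι κ R}

theorem apply_sum_smul_eq_mulVec [Fintype κ] (hQ : ∀ i j, Q i j = ω (δ i) (ε j))
    (d : κ → R) (i : ι) :
    ω (δ i) (∑ j, d j • ε j) = (Q *ᵥ d) i := by
  simp only [map_sum, map_smul, smul_eq_mul, mulVec, dotProduct, hQ, mul_comm]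

theorem sum_smul_apply_sum_smul_eq_dotProduct [Fintype ι] [Fintype κ]
    (hQ : ∀ i j, Q i j = ω (δ i) (ε j)) (c : ι → R) (d : κ → R) :
    ω (∑ i, c i • δ i) (∑ j, d j • ε j) = c ⬝ᵥ (Q *ᵥ d) := by
  rw [LinearMap.map_sum₂, dotProduct]
  refine Finset.sum_congr rfl fun i _ => ?_
  rw [LinearMap.map_smul₂, smul_eq_mul, ω.apply_sum_smul_eq_mulVec hQ]

theorem mem_orthogonal_span_range_iff {β : κ → M} {y : M} :
    y ∈ ω.orthogonal (Submodule.span R (Set.range β)) ↔ ∀ j, ω (β j) y = 0 := by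
  refine ⟨fun h j => h _ (Submodule.subset_span ⟨j, rfl⟩), fun h b hb => ?_⟩
  have hspan : Submodule.span R (Set.range β) ≤ LinearMap.ker (ω.flip y) :=
    Submodule.span_le.2 (Set.range_subset_iff.2 h)
  exact hspan hb

end LinearMap.BilinForm

theorem stmt_12_general (H : Type*) [AddCommGroup H] [Module ℤ H] (g k : ℕ)
    (ω : LinearMap.BilinForm ℤ H) (halt : ∀ x : H, ω x x = 0)
    (A B : Submodule ℤ H)
    (hB : ∀ x : H, x ∈ B ↔ ∀ b ∈ B, ω b x = 0)
    (α β γ : Fin g → H)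
    (hαA : A = Submodule.span ℤ (Set.range α))
    (hβB : B = Submodule.span ℤ (Set.range β))
    (Qαγ Qβγ Qγβ I : Matrix (Fin g) (Fin g) ℤ)
    (hQαγ : ∀ i j, Qαγ i j = ω (α i) (γ j))
    (hQβγ : ∀ i j, Qβγ i j = ω (β i) (γ j))
    (hQγβ : ∀ i j, Qγβ i j = ω (γ i) (β j))
    (hI : ∀ i j, I i j = if i = j ∧ (i : ℕ) < g - k then 1 else 0)
    (hQαβ : ∀ i j, ω (α i) (β j) = I i j)
    (v : Fin g → ℤ)
    (hx : (∑ i, v i • γ i) ∈ A ⊔ B) :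
    (∑ i, (-(I.mulVec (Qβγ.mulVec v))) i • α i) ∈ A ∧
    (∑ i, v i • γ i) - (∑ i, (-(I.mulVec (Qβγ.mulVec v))) i • α i) ∈ B ∧
    ∀ w : Fin g → ℤ,
      ω (∑ i, (-(I.mulVec (Qβγ.mulVec v))) i • α i) (∑ j, w j • γ j) =
        dotProduct v ((Qγβ * I * Qαγ).mulVec w) := by
  -- The `•` of the statement is `zsmul`; this identification makes it the module action.
  obtain rfl : ‹Module ℤ H› = AddCommGroup.toIntModule H := Subsingleton.elim _ _
  have hskew : ∀ x y, -ω x y = ω y x := LinearMap.IsAlt.neg halt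
  have hI_diag : I = diagonal fun i : Fin g => if (i : ℕ) < g - k then 1 else 0 := by
    ext i j
    rw [hI, diagonal_apply]
    by_cases hij : i = j <;> simp [hij]
  have hI_symm : Iᵀ = I := by rw [hI_diag, diagonal_transpose]
  set u := Qβγ *ᵥ v
  have hβx : ∀ j, ω (β j) (∑ i, v i • γ i) = u j := ω.apply_sum_smul_eq_mulVec hQβγ v
  have hu : ∀ j : Fin g, ¬ (j : ℕ) < g - k → u j = 0 := by
    intro j hj
    have hA_ker : A ≤ LinearMap.ker (ω (β j)) := by
      rw [hαA, Submodule.span_le, Set.range_subset_iff]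
      intro i
      rw [SetLike.mem_coe, LinearMap.mem_ker, ← hskew, hQαβ, hI, if_neg, neg_zero]
      rintro ⟨rfl, hi⟩
      exact hj hi
    have hB_ker : B ≤ LinearMap.ker (ω (β j)) := fun b hb =>
      (hB b).1 hb (β j) (hβB ▸ Submodule.subset_span ⟨j, rfl⟩)
    rw [← hβx]
    exact sup_le hA_ker hB_ker hx
  have hIu : I *ᵥ u = u := hI_diag ▸ diagonal_ite_one_zero_mulVec hu
  rw [hIu]
  have hβx' : ∀ j, ω (β j) (∑ i, (-u) i • α i) = u j := by
    intro j
    rw [ω.apply_sum_smul_eq_mulVec (Q := -Iᵀ)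
        (fun j i => by rw [Matrix.neg_apply, transpose_apply, ← hQαβ, hskew]),
      neg_mulVec, mulVec_neg, neg_neg, hI_symm, hIu]
  refine ⟨?_, ?_, fun w => ?_⟩
  · rw [hαA]
    exact Submodule.sum_mem _ fun i _ =>
      Submodule.smul_mem _ _ (Submodule.subset_span ⟨i, rfl⟩)
  · have hB_orth : ω.orthogonal B = B := SetLike.ext fun x => (hB x).symm
    rw [← hB_orth, hβB, ω.mem_orthogonal_span_range_iff]
    intro j
    rw [map_sub, hβx, hβx', sub_self]
  · have hQγβ_eq : Qγβ = -Qβγᵀ := by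
      ext i j
      rw [hQγβ, Matrix.neg_apply, transpose_apply, hQβγ, hskew]
    have hs : -u = v ᵥ* Qγβ ᵥ* I := by
      rw [hQγβ_eq, vecMul_neg, vecMul_transpose, neg_vecMul, ← hI_symm, vecMul_transpose, hIu]
    rw [ω.sum_smul_apply_sum_smul_eq_dotProduct hQαγ, hs]
    simp only [dotProduct_mulVec, vecMul_vecMul]

/-- Proposition `GeneralMatrix`: with `B = B^⊥`, generators `α`, `β`, `γ`
of `A`, `B`, `C`, intersection matrices as indicated, `I` the `g × g` matrix that is the
identity in its upper-left `(g−k) × (g−k)` block and zero elsewhere, and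
`ω(αᵢ,βⱼ) = Iᵢⱼ`: if `v ∈ ℤ^g` is such that `x = Σ vᵢγᵢ ∈ A + B`, then setting
`s = −I(_βQ_γ)v` and `x′ = Σ sᵢαᵢ`, one has `x′ ∈ A`, `x − x′ ∈ B`, and for every
`w ∈ ℤ^g`, `ω(x′, Σ wⱼγⱼ) = vᵀ·(_γQ_β) I (_αQ_γ)·w`. -/
theorem stmt_12 (H : Type*) [AddCommGroup H] [Module ℤ H] [Module.Free ℤ H] (g k : ℕ)
    (ω : LinearMap.BilinForm ℤ H) (halt : ∀ x : H, ω x x = 0)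
    (A B C : Submodule ℤ H)
    (hB : ∀ x : H, x ∈ B ↔ ∀ b ∈ B, ω b x = 0)
    (α β γ : Fin g → H)
    (hαA : A = Submodule.span ℤ (Set.range α))
    (hβB : B = Submodule.span ℤ (Set.range β))
    (hγC : C = Submodule.span ℤ (Set.range γ))
    (Qαγ Qβγ Qγβ I : Matrix (Fin g) (Fin g) ℤ)
    (hQαγ : ∀ i j, Qαγ i j = ω (α i) (γ j))
    (hQβγ : ∀ i j, Qβγ i j = ω (β i) (γ j))
    (hQγβ : ∀ i j, Qγβ i j = ω (γ i) (β j))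
    (hI : ∀ i j, I i j = if i = j ∧ (i : ℕ) < g - k then 1 else 0)
    (hQαβ : ∀ i j, ω (α i) (β j) = I i j)
    (v : Fin g → ℤ)
    (hx : (∑ i, v i • γ i) ∈ A ⊔ B) :
    (∑ i, (-(I.mulVec (Qβγ.mulVec v))) i • α i) ∈ A ∧
    (∑ i, v i • γ i) - (∑ i, (-(I.mulVec (Qβγ.mulVec v))) i • α i) ∈ B ∧
    ∀ w : Fin g → ℤ,
      ω (∑ i, (-(I.mulVec (Qβγ.mulVec v))) i • α i) (∑ j, w j • γ j) =
        dotProduct v ((Qγβ * I * Qαγ).mulVec w) :=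
  stmt_12_general H g k ω halt A B hB α β γ hαA hβB Qαγ Qβγ Qγβ I hQαγ hQβγ hQγβ hI hQαβ v hx
end
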